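/- The formal power series y = f₀ ∈ ℚ⟦z⟧ that is the generating function of Motzkin paths with two variants of level steps on odd levels satisfies the algebraic equation (z³ − z²)·y² + (1 − 3z + 2z²)·y + (2z − 1) = 0. -/

import Mathlib

/-- A step of a colored Motzkin path: up, down, or a level step with a color. -/
inductive Step | U | D | L (c : Bool)
deriving DecidableEq, Fintype

/-- Validity of a path starting at height `h`: never below the x-axis, and the
second color of level step (`c = true`) is only allowed at odd heights. -/
def okOdd : ℕ → List Step → Bool
  | _, [] => true
  | h, Step.U :: r => okOdd (h+1) r
  | h, Step.D :: r => decide (h ≠ 0) && okOdd (h-1) r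
  | h, Step.L c :: r => (!c || decide (h % 2 = 1)) && okOdd h r

/-- Final height of a path starting at height `h`. -/
def endH : ℕ → List Step → ℕ
  | h, [] => h
  | h, Step.U :: r => endH (h+1) r
  | h, Step.D :: r => endH (h-1) r
  | h, Step.L _ :: r => endH h r

/-- `cnt i n` = number of valid colored paths of length `n` (two colors of level
steps at odd heights, one at even heights) from height `0` to height `i`. -/
def cnt (i n : ℕ) : ℕ :=
  (Finset.univ.filter fun f : Fin n → Step =>
    okOdd 0 (List.ofFn f) = true ∧ endH 0 (List.ofFn f) = i).card

/-!
Let `two : ℕ → Bool` say at which heights level steps come in two colours, and let `F two` be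
the generating function of such coloured Motzkin paths from height 0 to height 0. Splitting a
path at its first step and, when that step goes up, at its first return to height 0 gives
`F two = 1 + c X F two + X² F two' F two`, where `c ∈ {1, 2}` is the number of level colours
at height 0 and `two' k = two (k + 1)` is `two` seen from height 1. Shifting the parity
predicate twice gives it back, so `y = F odd` and `y' = F even` satisfy
`y = 1 + X y + X² y' y` and `y' = 1 + 2 X y' + X² y y'`; eliminating `y'` gives the quadratic.
-/

/-- `okOdd` with the heights admitting the second colour of level step given by `two`. -/
def okWith (two : ℕ → Bool) : ℕ → List Step → Bool
  | _, [] => true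
  | h, Step.U :: r => okWith two (h + 1) r
  | 0, Step.D :: _ => false
  | h + 1, Step.D :: r => okWith two h r
  | h, Step.L c :: r => (!c || two h) && okWith two h r

lemma okOdd_eq_okWith (l : List Step) (h : ℕ) :
    okOdd h l = okWith (fun k => decide (k % 2 = 1)) h l := by
  induction l generalizing h with
  | nil => rfl
  | cons s r ih => rcases s with _ | _ | c <;> rcases h with _ | h <;> simp [okOdd, okWith, ih]

lemma endH_append (l₁ l₂ : List Step) (h : ℕ) : endH h (l₁ ++ l₂) = endH (endH h l₁) l₂ := by
  induction l₁ generalizing h with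
  | nil => rfl
  | cons s r ih => rcases s with _ | _ | c <;> simp [endH, ih]

variable {two : ℕ → Bool}

lemma okWith_append (l₁ l₂ : List Step) (h : ℕ) :
    okWith two h (l₁ ++ l₂) = (okWith two h l₁ && okWith two (endH h l₁) l₂) := by
  induction l₁ generalizing h with
  | nil => rfl
  | cons s r ih =>
    rcases s with _ | _ | c <;> rcases h with _ | h <;> simp [okWith, endH, ih, Bool.and_assoc]

lemma endH_succ_of_okWith {l : List Step} {h : ℕ} (hl : okWith two h l) :
    endH (h + 1) l = endH h l + 1 := by
  induction l generalizing h with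
  | nil => rfl
  | cons s r ih =>
    rcases s with _ | _ | c <;> rcases h with _ | h <;> simp_all [okWith, endH]

lemma okWith_succ_of_okWith_shift {l : List Step} {h : ℕ}
    (hl : okWith (fun k => two (k + 1)) h l) : okWith two (h + 1) l := by
  induction l generalizing h with
  | nil => rfl
  | cons s r ih =>
    rcases s with _ | _ | c <;> rcases h with _ | h <;> simp_all [okWith]

/-- For a path starting at height `h + 1`, the parts before and after its first down step
to height 0. -/
def firstReturn : ℕ → List Step → List Step × List Step
  | _, [] => ([], [])
  | h, Step.U :: r => (firstReturn (h + 1) r).map (Step.U :: ·) id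
  | 0, Step.D :: r => ([], r)
  | h + 1, Step.D :: r => (firstReturn h r).map (Step.D :: ·) id
  | h, Step.L c :: r => (firstReturn h r).map (Step.L c :: ·) id

lemma firstReturn_spec {l : List Step} {h : ℕ} (hl : okWith two (h + 1) l)
    (he : endH (h + 1) l = 0) :
    l = (firstReturn h l).1 ++ Step.D :: (firstReturn h l).2 ∧
      okWith (fun k => two (k + 1)) h (firstReturn h l).1 ∧ endH h (firstReturn h l).1 = 0 := by
  induction l generalizing h with
  | nil => simp [endH] at he
  | cons s r ih =>
    rcases s with _ | _ | c
    · obtain ⟨hr, hp, hpe⟩ := ih (h := h + 1) hl he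
      exact ⟨by simpa [firstReturn] using hr, hp, hpe⟩
    · rcases h with _ | h
      · simp_all [okWith, endH, firstReturn]
      · obtain ⟨hr, hp, hpe⟩ := ih (h := h) hl he
        exact ⟨by simpa [firstReturn] using hr, hp, hpe⟩
    · simp only [okWith, Bool.and_eq_true] at hl
      obtain ⟨hr, hp, hpe⟩ := ih hl.2 he
      exact ⟨by simpa [firstReturn] using hr, by simp [okWith, firstReturn, hl.1, hp], hpe⟩

lemma firstReturn_append {p : List Step} {h : ℕ} (hp : okWith two h p) (he : endH h p = 0)
    (s : List Step) : firstReturn h (p ++ Step.D :: s) = (p, s) := by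
  induction p generalizing h with
  | nil => simp_all [endH, firstReturn]
  | cons st r ih =>
    rcases st with _ | _ | c <;> rcases h with _ | h <;> simp_all [okWith, endH, firstReturn]

open Finset

variable (two) in
def motzkinPaths (n : ℕ) : Finset (List Step) :=
  {l ∈ (univ : Finset (Fin n → Step)).image List.ofFn | okWith two 0 l ∧ endH 0 l = 0}

lemma mem_motzkinPaths {n : ℕ} {l : List Step} :
    l ∈ motzkinPaths two n ↔ l.length = n ∧ okWith two 0 l ∧ endH 0 l = 0 := by
  have : l ∈ (univ : Finset (Fin n → Step)).image List.ofFn ↔ l.length = n :=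
    ⟨fun h => by obtain ⟨f, -, rfl⟩ := mem_image.1 h; simp,
      fun h => mem_image.2 ⟨fun i => l[i], mem_univ _, by simp [h.symm]⟩⟩
  simp [motzkinPaths, this]

lemma cnt_zero_eq_card_motzkinPaths (n : ℕ) :
    cnt 0 n = #(motzkinPaths (fun k => decide (k % 2 = 1)) n) := by
  rw [cnt, motzkinPaths, filter_image, card_image_of_injective _ List.ofFn_injective]
  simp [okOdd_eq_okWith]

lemma card_motzkinPaths_zero : #(motzkinPaths two 0) = 1 := by
  rw [card_eq_one]
  refine ⟨[], ?_⟩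
  ext l
  simp only [mem_motzkinPaths, List.length_eq_zero_iff, mem_singleton]
  exact ⟨And.left, by rintro rfl; exact ⟨rfl, rfl, rfl⟩⟩

def levelColors (b : Bool) : Finset Bool := {c | !c || b}

lemma card_filter_head_ne_up (n : ℕ) :
    #{l ∈ motzkinPaths two (n + 1) | l.head? ≠ some .U} =
      #(levelColors (two 0)) * #(motzkinPaths two n) := by
  have : {l ∈ motzkinPaths two (n + 1) | l.head? ≠ some .U} =
      (levelColors (two 0) ×ˢ motzkinPaths two n).image fun q => .L q.1 :: q.2 := by
    ext l
    rcases l with _ | ⟨_ | _ | c, r⟩ <;> simp [mem_motzkinPaths, levelColors, okWith, endH]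
    tauto
  rw [this, card_image_of_injective _ (fun _ _ h => by simpa [Prod.ext_iff] using h), card_product]

lemma up_append_mem_motzkinPaths {p s : List Step} {i j : ℕ}
    (hp : p ∈ motzkinPaths (fun k => two (k + 1)) i) (hs : s ∈ motzkinPaths two j) :
    .U :: (p ++ .D :: s) ∈ motzkinPaths two (i + j + 2) := by
  rw [mem_motzkinPaths] at hp hs ⊢
  obtain ⟨hpl, hpok, hpe⟩ := hp
  obtain ⟨hsl, hsok, hse⟩ := hs
  have hp1 : endH 1 p = 1 := by simpa [hpe] using endH_succ_of_okWith hpok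
  refine ⟨by simp; omega, ?_, ?_⟩
  · simp [okWith, okWith_append, okWith_succ_of_okWith_shift hpok, hp1, hsok]
  · simp [endH, endH_append, hp1, hse]

lemma firstReturn_mem_motzkinPaths {r : List Step} {n : ℕ}
    (hr : .U :: r ∈ motzkinPaths two n) :
    r = (firstReturn 0 r).1 ++ .D :: (firstReturn 0 r).2 ∧
      (firstReturn 0 r).1 ∈ motzkinPaths (fun k => two (k + 1)) (firstReturn 0 r).1.length ∧
      (firstReturn 0 r).2 ∈ motzkinPaths two (firstReturn 0 r).2.length := by
  rw [mem_motzkinPaths] at hr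
  obtain ⟨-, hok, he⟩ := hr
  simp only [okWith, endH] at hok he
  obtain ⟨hsplit, hpok, hpe⟩ := firstReturn_spec (h := 0) hok he
  have hp1 : endH 1 (firstReturn 0 r).1 = 1 := by simpa [hpe] using endH_succ_of_okWith hpok
  rw [hsplit, okWith_append, hp1] at hok
  rw [hsplit, endH_append, hp1] at he
  simp only [Bool.and_eq_true] at hok
  exact ⟨hsplit, mem_motzkinPaths.2 ⟨rfl, hpok, hpe⟩, mem_motzkinPaths.2 ⟨rfl, hok.2, he⟩⟩

lemma card_filter_head_up (m : ℕ) :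
    #{l ∈ motzkinPaths two (m + 2) | l.head? = some .U} =
      ∑ ij ∈ antidiagonal m,
        #(motzkinPaths (fun k => two (k + 1)) ij.1) * #(motzkinPaths two ij.2) := by
  simp_rw [← card_product, ← card_sigma]
  symm
  apply card_nbij' (fun q => .U :: (q.2.1 ++ .D :: q.2.2))
    (fun l => ⟨((firstReturn 0 l.tail).1.length, (firstReturn 0 l.tail).2.length),
      firstReturn 0 l.tail⟩)
  · rintro ⟨⟨i, j⟩, p, s⟩ hq
    simp only [coe_sigma, Set.mem_sigma_iff, coe_product, Set.mem_prod, mem_coe,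
      HasAntidiagonal.mem_antidiagonal] at hq
    obtain ⟨rfl, hp, hs⟩ := hq
    simpa using up_append_mem_motzkinPaths hp hs
  · rintro (_ | ⟨_ | _ | c, r⟩) hl <;> simp only [coe_filter, Set.mem_ofPred_eq, List.head?_cons,
      reduceCtorEq, Option.some.injEq, List.head?_nil, and_false, and_true] at hl
    obtain ⟨hsplit, hp, hs⟩ := firstReturn_mem_motzkinPaths hl
    have hlen := (mem_motzkinPaths.1 hl).1
    rw [List.length_cons, hsplit, List.length_append, List.length_cons] at hlen
    simp only [List.tail_cons, coe_sigma, Set.mem_sigma_iff, coe_product, Set.mem_prod, mem_coe,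
      HasAntidiagonal.mem_antidiagonal]
    exact ⟨by omega, hp, hs⟩
  · rintro ⟨⟨i, j⟩, p, s⟩ hq
    simp only [coe_sigma, Set.mem_sigma_iff, coe_product, Set.mem_prod, mem_coe] at hq
    obtain ⟨-, hp, hs⟩ := hq
    obtain ⟨rfl, hpok, hpe⟩ := mem_motzkinPaths.1 hp
    obtain ⟨rfl, -, -⟩ := mem_motzkinPaths.1 hs
    simp [firstReturn_append hpok hpe]
  · rintro (_ | ⟨_ | _ | c, r⟩) hl <;> simp only [coe_filter, Set.mem_ofPred_eq, List.head?_cons,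
      reduceCtorEq, Option.some.injEq, List.head?_nil, and_false, and_true] at hl
    exact congrArg (.U :: ·) (firstReturn_mem_motzkinPaths hl).1.symm

lemma card_motzkinPaths_succ (n : ℕ) :
    #(motzkinPaths two (n + 1)) = #(levelColors (two 0)) * #(motzkinPaths two n) +
      #{l ∈ motzkinPaths two (n + 1) | l.head? = some .U} := by
  rw [← card_filter_head_ne_up]
  exact (card_filter_add_card_filter_not _).symm.trans (add_comm _ _)

lemma filter_head_eq_up_motzkinPaths_one : {l ∈ motzkinPaths two 1 | l.head? = some .U} = ∅ := by
  refine filter_eq_empty_iff.2 fun l hl hU => ?_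
  obtain ⟨hlen, -, he⟩ := mem_motzkinPaths.1 hl
  obtain ⟨s, rfl⟩ := List.length_eq_one_iff.1 hlen
  cases hU
  simp [endH] at he

open PowerSeries

variable (two) in
noncomputable def motzkinGF : ℚ⟦X⟧ :=
  PowerSeries.mk fun n => (#(motzkinPaths two n) : ℚ)

variable (two) in
theorem motzkinGF_eq :
    motzkinGF two = 1 + C (#(levelColors (two 0)) : ℚ) * X * motzkinGF two +
      X ^ 2 * motzkinGF (fun k => two (k + 1)) * motzkinGF two := by
  simp only [mul_assoc]
  ext n
  rcases n with _ | _ | m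
  · simp [motzkinGF, card_motzkinPaths_zero]
  · rw [map_add, map_add, coeff_C_mul, coeff_succ_X_mul, coeff_X_pow_mul', if_neg (by omega)]
    simp [motzkinGF, card_motzkinPaths_succ, filter_head_eq_up_motzkinPaths_one]
  · rw [map_add, map_add, coeff_C_mul, coeff_succ_X_mul, coeff_one, if_neg (by omega),
      coeff_X_pow_mul', if_pos (by omega), show m + 1 + 1 - 2 = m by omega, coeff_mul]
    simp only [motzkinGF, coeff_mk]
    rw [card_motzkinPaths_succ (m + 1), card_filter_head_up]
    push_cast
    ring

open PowerSeries in
/-- The generating function of Motzkin paths with two variants of level steps on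
odd levels satisfies `(z³−z²)y² + (1−3z+2z²)y + (2z−1) = 0`. -/
theorem stmt1 :
    (X ^ 3 - X ^ 2) * (PowerSeries.mk fun n => (cnt 0 n : ℚ)) ^ 2 +
      (1 - 3 * X + 2 * X ^ 2) * (PowerSeries.mk fun n => (cnt 0 n : ℚ)) +
      (2 * X - 1) = 0 := by
  have hcnt : (PowerSeries.mk fun n => (cnt 0 n : ℚ)) = motzkinGF fun k => decide (k % 2 = 1) := by
    ext n
    simp [motzkinGF, cnt_zero_eq_card_motzkinPaths]
  have hodd : (fun k => decide ((k + 1 + 1) % 2 = 1)) = fun k => decide (k % 2 = 1) := by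
    funext k
    simp only [decide_eq_decide]
    omega
  have hy := motzkinGF_eq fun k => decide (k % 2 = 1)
  have hy' := motzkinGF_eq fun k => decide ((k + 1) % 2 = 1)
  rw [hodd] at hy'
  rw [show #(levelColors (decide (0 % 2 = 1))) = 1 from rfl, Nat.cast_one, map_one] at hy
  rw [show #(levelColors (decide ((0 + 1) % 2 = 1))) = 2 from rfl, Nat.cast_ofNat,
    map_ofNat] at hy'
  rw [hcnt]
  linear_combination (1 - 2 * X - X ^ 2 * motzkinGF fun k => decide (k % 2 = 1)) * hy +
    (X ^ 2 * motzkinGF fun k => decide (k % 2 = 1)) * hy'
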